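/- Assume the Continuum Hypothesis (2^{ℵ₀} = ℵ₁). Let B be a countable Boolean algebra and let (φ_α)_{α<ω₂} be Boolean homomorphisms from B into M_{ω₂}. Then there exist distinct α, β < ω₂ which are symmetric: for all a, b ∈ B, φ_α(a) ⊓ φ_β(b) = ⊥ holds if and only if φ_β(a) ⊓ φ_α(b) = ⊥ holds. -/

import Mathlib

open MeasureTheory Set Filter Topology
open scoped symmDiff ENNReal

noncomputable section

universe u v

/-- The two-element set `{0,1}`, as an additive group (addition mod 2) with the
discrete topology. -/
inductive Two : Type
  | zero
  | one
  deriving DecidableEq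

instance : Fintype Two := ⟨{Two.zero, Two.one}, fun x => by cases x <;> simp⟩

instance : Zero Two := ⟨Two.zero⟩
instance : One Two := ⟨Two.one⟩

/-- Addition modulo 2 on `{0,1}`. -/
def Two.add : Two → Two → Two
  | Two.zero, x => x
  | Two.one, Two.zero => Two.one
  | Two.one, Two.one => Two.zero

instance : Add Two := ⟨Two.add⟩
instance : Neg Two := ⟨fun x => x⟩

instance : AddCommGroup Two where
  add := (· + ·)
  zero := Two.zero
  neg := (- ·)
  add_assoc := by decide
  zero_add := by decide
  add_zero := by decide
  neg_add_cancel := by decide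
  add_comm := by decide
  nsmul := nsmulRec
  zsmul := zsmulRec

instance : TopologicalSpace Two := ⊥
instance : DiscreteTopology Two := ⟨rfl⟩

instance : IsTopologicalAddGroup Two where
  continuous_add := continuous_of_discreteTopology
  continuous_neg := continuous_of_discreteTopology

/-- The Cantor cube `{0,1}^κ`, with the product topology. -/
abbrev Cube (κ : Type u) : Type u := κ → Two

instance (κ : Type u) : MeasurableSpace (Cube κ) := borel _

instance (κ : Type u) : BorelSpace (Cube κ) := ⟨rfl⟩

/-- The fair-coin product measure `λ_κ` on `{0,1}^κ`: the Haar measure of the compact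
group `{0,1}^κ`, normalized so that the whole space has measure `1`. -/
def lam (κ : Type u) : Measure (Cube κ) :=
  Measure.addHaarMeasure ⟨⟨Set.univ, isCompact_univ⟩, by simpa using Set.univ_nonempty⟩

/-- The Boolean algebra of measurable subsets of `X`. -/
abbrev MSet (X : Type u) [MeasurableSpace X] : Type u := {s : Set X // MeasurableSet s}

/-- The ideal of `μ`-null sets in the Boolean ring of measurable subsets of `X`. -/
def nullIdeal {X : Type u} [MeasurableSpace X] (μ : Measure X) :
    Ideal (AsBoolRing (MSet X)) where
  carrier := {s | μ (ofBoolRing s : MSet X).1 = 0}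
  zero_mem' := by
    show μ (ofBoolRing (0 : AsBoolRing (MSet X)) : MSet X).1 = 0
    rw [ofBoolRing_zero]
    simpa using measure_empty (μ := μ)
  add_mem' := by
    intro a b ha hb
    show μ (ofBoolRing (a + b) : MSet X).1 = 0
    rw [ofBoolRing_add]
    refine le_antisymm ?_ (zero_le)
    calc μ ((ofBoolRing a ∆ ofBoolRing b : MSet X) : Set X)
        ≤ μ (((ofBoolRing a : MSet X) : Set X) ∪ ((ofBoolRing b : MSet X) : Set X)) := by
          refine measure_mono ?_
          simp only [symmDiff_def, MeasurableSet.sup_eq_union, MeasurableSet.coe_union,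
            MeasurableSet.coe_sdiff]
          exact Set.union_subset_union Set.diff_subset Set.diff_subset
      _ ≤ μ ((ofBoolRing a : MSet X) : Set X) + μ ((ofBoolRing b : MSet X) : Set X) :=
          measure_union_le _ _
      _ = 0 := by rw [ha, hb, add_zero]
  smul_mem' := by
    intro c x hx
    show μ (ofBoolRing (c * x) : MSet X).1 = 0
    rw [ofBoolRing_mul]
    refine le_antisymm ?_ (zero_le)
    calc μ ((ofBoolRing c ⊓ ofBoolRing x : MSet X) : Set X)
        ≤ μ ((ofBoolRing x : MSet X) : Set X) := by
          refine measure_mono ?_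
          simp only [MeasurableSet.inf_eq_inter, MeasurableSet.coe_inter]
          exact Set.inter_subset_right
      _ = 0 := hx

instance {X : Type u} [MeasurableSpace X] (μ : Measure X) :
    BooleanRing (AsBoolRing (MSet X) ⧸ nullIdeal μ) where
  isIdempotentElem a := by
    show a * a = a
    obtain ⟨x, rfl⟩ := Ideal.Quotient.mk_surjective a
    rw [← map_mul]
    exact congrArg _ (BooleanRing.mul_self x)

/-- The measure algebra of the measure `μ`: measurable sets modulo `μ`-null sets,
as a Boolean algebra.  For `μ = lam κ` this is the measure algebra `M_κ`. -/
abbrev MAlg (X : Type u) [MeasurableSpace X] (μ : Measure X) : Type u :=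
  AsBoolAlg (AsBoolRing (MSet X) ⧸ nullIdeal μ)

/-- The class of a measurable set in the measure algebra. -/
def MAlg.mk {X : Type u} [MeasurableSpace X] (μ : Measure X) (s : MSet X) : MAlg X μ :=
  toBoolAlg (Ideal.Quotient.mk (nullIdeal μ) (toBoolRing s))

/-- The measure induced by `μ` on its measure algebra `MAlg X μ` (with real values). -/
def mval {X : Type u} [MeasurableSpace X] (μ : Measure X) (a : MAlg X μ) : ℝ :=
  Quotient.liftOn' (ofBoolAlg a) (fun s => (μ (ofBoolRing s : MSet X).1).toReal)
    (by
      intro s t h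
      have hst : s - t ∈ nullIdeal μ := by
        rwa [Submodule.quotientRel_def] at h
      have h0 : μ (((ofBoolRing s : MSet X) : Set X) ∆ ((ofBoolRing t : MSet X) : Set X)) = 0 := by
        have hn : μ ((ofBoolRing (s - t) : MSet X) : Set X) = 0 := hst
        rw [ofBoolRing_sub] at hn
        simpa only [symmDiff_def, MeasurableSet.sup_eq_union, MeasurableSet.coe_union,
          MeasurableSet.coe_sdiff, Set.sup_eq_union] using hn
      have hc := measure_congr (μ := μ) (MeasureTheory.measure_symmDiff_eq_zero_iff.mp h0)
      simp only [hc])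

/-- `ω₂`, the second uncountable cardinal's initial ordinal, as a linearly ordered type
(the type of ordinals `α < ω₂`). -/
abbrev Omega2 : Type := (Cardinal.aleph 2).ord.ToType

/-!
If no two indices were symmetric, every pair `α ≠ β` would carry a witness `(a, b, n)`:
`φ_α a` and `φ_β b` are disjoint while `φ_β a ⊓ φ_α b` has measure more than `1/(n+1)`.
This colours the pairs with countably many colours, and `2^ℵ₀ < ℵ₂` by CH, so the Erdős–Rado
ramification argument (branches of length `ω₁`) yields an infinite sequence `α₀, α₁, …` on
whose increasing pairs the witness is constant. The elements `φ_{α_{2i+1}} a ⊓ φ_{α_{2i}} b` are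
then pairwise disjoint, each of measure more than `1/(n+1)`, which is impossible in a finite
measure algebra.
-/

open Cardinal Function

namespace ErdosRado

variable {W X : Type u} {C : Type*} [LinearOrder W] [WellFoundedLT W] [Nonempty X] (c : X → X → C)

/-- The ramification branch of `a`: stage `ξ` is a point, new to the branch, whose colours against
all earlier stages agree with those of `a` (and `a` itself qualifies until it has been used).
Through `Classical.epsilon` the choice depends on `a` only via these colours. -/
def branch (a : X) : W → X :=
  wellFounded_lt.fix fun ξ b =>
    Classical.epsilon fun y => ∀ η (hη : η < ξ), b η hη ≠ y ∧ c (b η hη) y = c (b η hη) a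

theorem branch_eq (a : X) (ξ : W) :
    branch c a ξ = Classical.epsilon fun y =>
      ∀ η < ξ, branch c a η ≠ y ∧ c (branch c a η) y = c (branch c a η) a := by
  rw [branch, WellFounded.fix_eq]

theorem branch_spec {a : X} {ξ : W} (ha : ∀ η < ξ, branch c a η ≠ a) {η : W} (hη : η < ξ) :
    branch c a η ≠ branch c a ξ ∧ c (branch c a η) (branch c a ξ) = c (branch c a η) a := by
  have hex : ∃ y, ∀ η < ξ, branch c a η ≠ y ∧ c (branch c a η) y = c (branch c a η) a :=
    ⟨a, fun η hη => ⟨ha η hη, rfl⟩⟩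
  rw [branch_eq c a ξ]
  exact Classical.epsilon_spec hex η hη

theorem branch_eq_branch_of_color_eq {a b : X} {ξ : W}
    (h : ∀ η < ξ, c (branch c a η) a = c (branch c b η) b) : branch c a ξ = branch c b ξ := by
  induction ξ using WellFoundedLT.induction with
  | _ ξ ih =>
    have hab : ∀ η < ξ, branch c a η = branch c b η := fun η hη =>
      ih η hη fun ζ hζ => h ζ (hζ.trans hη)
    rw [branch_eq, branch_eq]
    congr 1
    ext y
    exact forall₂_congr fun η hη => by rw [h η hη, hab η hη]

theorem injOn_color_branch (ξ : W) :
    InjOn (fun a (η : Iio ξ) => c (branch c a η.1) a) {a | branch c a ξ = a} := by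
  intro a ha b hb hab
  calc a = branch c a ξ := ha.symm
    _ = branch c b ξ := branch_eq_branch_of_color_eq c fun η hη => congr_fun hab ⟨η, hη⟩
    _ = b := hb

theorem mk_le_of_forall_exists_branch_eq [Countable C] (hW : ∀ ξ : W, (Iio ξ).Countable)
    (h : ∀ a, ∃ ξ : W, branch c a ξ = a) : #X ≤ #W * 𝔠 := by
  obtain ⟨e, he⟩ := exists_injective_nat C
  have hfiber (ξ : W) : #{a | branch c a ξ = a} ≤ 𝔠 := by
    have hinj : InjOn (fun a (η : Iio ξ) => e (c (branch c a η.1) a)) {a | branch c a ξ = a} :=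
      fun a ha b hb hab => injOn_color_branch c ξ ha hb (funext fun η => he (congr_fun hab η))
    calc #{a | branch c a ξ = a} ≤ #(Iio ξ → ℕ) := by
          rw [← mk_image_eq_of_injOn _ _ hinj]
          exact mk_set_le _
      _ = ℵ₀ ^ #(Iio ξ) := by simp
      _ ≤ ℵ₀ ^ ℵ₀ := power_le_power_left aleph0_ne_zero (hW ξ).le_aleph0
      _ = 𝔠 := aleph0_power_aleph0
  have hX : (univ : Set X) = ⋃ ξ : W, {a | branch c a ξ = a} :=
    (eq_univ_of_forall fun a => mem_iUnion.mpr (h a)).symm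
  calc #X = #(⋃ ξ : W, {a | branch c a ξ = a}) := by rw [← hX, mk_univ]
    _ ≤ #W * ⨆ ξ : W, #{a | branch c a ξ = a} := mk_iUnion_le _
    _ ≤ #W * 𝔠 := by gcongr; exact ciSup_le' hfiber

theorem exists_homogeneous_of_forall_branch_ne [Countable C] [Uncountable W]
    (hW : ∀ ξ : W, (Iio ξ).Countable) {a : X} (ha : ∀ ξ : W, branch c a ξ ≠ a) :
    ∃ f : ℕ → X, Injective f ∧ ∃ r, ∀ i j, i < j → c (f i) (f j) = r := by
  obtain ⟨r, hr⟩ : ∃ r, ¬{ξ : W | c (branch c a ξ) a = r}.Countable := by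
    by_contra! h
    refine not_countable_univ ((countable_iUnion h).mono ?_)
    exact fun ξ _ => mem_iUnion.mpr ⟨_, rfl⟩
  set S := {ξ : W | c (branch c a ξ) a = r}
  have : NoMaxOrder S := ⟨fun ξ => by
    have hIic : (Iic ξ.1).Countable := Iio_insert (a := ξ.1) ▸ (hW ξ).insert ξ.1
    obtain ⟨η, hη, hξη⟩ := not_subset.mp fun hsub => hr (hIic.mono hsub)
    exact ⟨⟨η, hη⟩, not_le.mp hξη⟩⟩
  obtain ⟨ξ₀, hξ₀⟩ : S.Nonempty := nonempty_iff_ne_empty.mpr fun h => hr (h ▸ countable_empty)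
  obtain ⟨g, hg, -⟩ := Nat.exists_strictMono' (⟨ξ₀, hξ₀⟩ : S)
  have hspec {i j : ℕ} (hij : i < j) := branch_spec c (fun η _ => ha η) (hg hij)
  exact ⟨fun i => branch c a (g i).1, Injective.of_lt_imp_ne fun i j hij => (hspec hij).1,
    r, fun i j hij => (hspec hij).2.trans (g i).2⟩

end ErdosRado

open ErdosRado in
theorem exists_injective_homogeneous_of_continuum_lt {X : Type u} {C : Type*} [Countable C]
    (hX : 𝔠 < #X) (c : X → X → C) :
    ∃ f : ℕ → X, Injective f ∧ ∃ r, ∀ i j, i < j → c (f i) (f j) = r := by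
  have : Nonempty X := mk_ne_zero_iff.mp (ne_bot_of_gt hX)
  let W := (ℵ₁ : Cardinal.{u}).ord.ToType
  have hWcard : #W = ℵ₁ := mk_ord_toType _
  have hW (ξ : W) : (Iio ξ).Countable := by
    rw [← le_aleph0_iff_set_countable, ← lt_aleph_one_iff]
    exact (mk_Iio_lt ξ (by rw [hWcard, Ordinal.type_toType])).trans_eq hWcard
  have : Uncountable W := aleph0_lt_mk_iff.mp (hWcard ▸ aleph0_lt_aleph_one)
  -- Either every point ends its own branch before `ω₁`, and is then coded by countably many
  -- colours, or some branch runs through all of `ω₁`.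
  by_cases h : ∀ a, ∃ ξ : W, branch c a ξ = a
  · refine absurd hX (not_lt.mpr ?_)
    calc #X ≤ #W * 𝔠 := mk_le_of_forall_exists_branch_eq c hW h
      _ ≤ 𝔠 * 𝔠 := by gcongr; exact hWcard ▸ aleph_one_le_continuum
      _ = 𝔠 := continuum_mul_self
  · obtain ⟨a, ha⟩ := not_forall.mp h
    exact exists_homogeneous_of_forall_branch_ne c hW (not_exists.mp ha)

namespace MAlg

variable {X : Type u} [MeasurableSpace X] {μ : Measure X}

theorem mk_surjective : Surjective (MAlg.mk μ) := fun a =>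
  (Ideal.Quotient.mk_surjective (ofBoolAlg a)).imp fun _ hr => congrArg toBoolAlg hr

theorem mk_inf (s t : MSet X) : mk μ (s ⊓ t) = mk μ s ⊓ mk μ t := by
  rw [mk, mk, mk, toBoolRing_inf, map_mul, toBoolAlg_mul]

theorem mk_eq_bot_iff {s : MSet X} : mk μ s = ⊥ ↔ μ s.1 = 0 := by
  rw [mk, ← toBoolAlg_zero, toBoolAlg.injective.eq_iff, Ideal.Quotient.eq_zero_iff_mem]
  rfl

theorem disjoint_mk_iff {s t : MSet X} : Disjoint (mk μ s) (mk μ t) ↔ AEDisjoint μ s.1 t.1 := by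
  rw [disjoint_iff, ← mk_inf, mk_eq_bot_iff]
  rfl

end MAlg

section MeasureAlgebra

variable {X : Type u} [MeasurableSpace X] {μ : Measure X}

theorem mval_mk (s : MSet X) : mval μ (MAlg.mk μ s) = (μ s.1).toReal :=
  rfl

variable [IsFiniteMeasure μ]

theorem mval_pos {a : MAlg X μ} (ha : a ≠ ⊥) : 0 < mval μ a := by
  obtain ⟨s, rfl⟩ := MAlg.mk_surjective a
  exact ENNReal.toReal_pos (mt MAlg.mk_eq_bot_iff.mpr ha) (measure_ne_top μ _)

theorem tendsto_mval_cofinite_zero {ι : Type*} [Countable ι] {u : ι → MAlg X μ}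
    (hu : Pairwise (Disjoint on u)) : Tendsto (fun i => mval μ (u i)) cofinite (𝓝 0) := by
  choose s hs using fun i => MAlg.mk_surjective (u i)
  have hd : Pairwise (AEDisjoint μ on fun i => (s i).1) := fun i j hij =>
    MAlg.disjoint_mk_iff.mp (by simpa only [hs] using hu hij)
  have hsum : ∑' i, μ (s i).1 ≠ ⊤ := by
    rw [← measure_iUnion₀ hd fun i => (s i).2.nullMeasurableSet]
    exact measure_ne_top μ _
  simpa only [← hs, mval_mk, comp_def, ENNReal.toReal_zero] using
    (ENNReal.tendsto_toReal ENNReal.zero_ne_top).comp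
      (ENNReal.tendsto_cofinite_zero_of_tsum_ne_top hsum)

theorem exists_mval_inf_lt_of_disjoint {p q : ℕ → MAlg X μ}
    (hpq : ∀ i j, i < j → Disjoint (p i) (q j)) {δ : ℝ} (hδ : 0 < δ) :
    ∃ i j, i < j ∧ mval μ (p j ⊓ q i) < δ := by
  have hu : Pairwise (Disjoint on fun i => p (2 * i + 1) ⊓ q (2 * i)) :=
    (pairwise_disjoint_on _).mpr fun i j hij =>
      (hpq (2 * i + 1) (2 * j) (by omega)).mono inf_le_left inf_le_right
  obtain ⟨i, hi⟩ := ((tendsto_mval_cofinite_zero hu).eventually (gt_mem_nhds hδ)).exists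
  exact ⟨2 * i, 2 * i + 1, by omega, hi⟩

end MeasureAlgebra

theorem exists_ne_inf_eq_bot_iff_of_continuum_lt {ι : Type u} (hι : 𝔠 < #ι) {B : Type*}
    [Countable B] {X : Type*} [MeasurableSpace X] (μ : Measure X) [IsFiniteMeasure μ]
    (φ : ι → B → MAlg X μ) :
    ∃ α β, α ≠ β ∧ ∀ a b, (φ α a ⊓ φ β b = ⊥ ↔ φ β a ⊓ φ α b = ⊥) := by
  by_contra! h
  have hwit (α β : ι) (hαβ : α ≠ β) : ∃ t : B × B × ℕ, Disjoint (φ α t.1) (φ β t.2.1) ∧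
      ((t.2.2 : ℝ) + 1)⁻¹ < mval μ (φ β t.1 ⊓ φ α t.2.1) := by
    obtain ⟨a, b, ⟨hab, hba⟩ | ⟨hab, hba⟩⟩ := h α β hαβ
    · obtain ⟨n, hn⟩ := exists_nat_one_div_lt (mval_pos hba)
      exact ⟨(a, b, n), disjoint_iff.mpr hab, by simpa using hn⟩
    · rw [inf_comm] at hab hba
      obtain ⟨n, hn⟩ := exists_nat_one_div_lt (mval_pos hab)
      exact ⟨(b, a, n), disjoint_iff.mpr hba, by simpa using hn⟩
  obtain ⟨α, β, hαβ⟩ := (one_lt_iff_nontrivial.mp (one_lt_aleph0.trans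
    (aleph0_lt_continuum.trans hι))).exists_pair_ne
  have : Nonempty B := ⟨(h α β hαβ).choose⟩
  choose! col hcol using hwit
  obtain ⟨f, hf, ⟨a, b, n⟩, hcolf⟩ := exists_injective_homogeneous_of_continuum_lt hι col
  have hf' {i j : ℕ} (hij : i < j) := hcolf i j hij ▸ hcol (f i) (f j) (hf.ne hij.ne)
  obtain ⟨i, j, hij, hlt⟩ := exists_mval_inf_lt_of_disjoint (p := fun i => φ (f i) a)
    (q := fun i => φ (f i) b) (fun i j hij => (hf' hij).1) (δ := ((n : ℝ) + 1)⁻¹) (by positivity)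
  exact (hf' hij).2.not_gt hlt

instance (κ : Type u) : IsFiniteMeasure (lam κ) := by
  rw [lam]
  infer_instance

theorem continuum_lt_mk_omega2 (hCH : Cardinal.continuum.{v} = ℵ₁) : 𝔠 < #Omega2 := by
  have hCH₀ : Cardinal.continuum.{0} = ℵ₁ :=
    lift_injective.{v} (by rw [lift_continuum, lift_aleph, hCH]; simp)
  rw [mk_ord_toType, hCH₀]
  exact aleph_lt_aleph.mpr one_lt_two

/-- Under CH, for any family `(φ_α)_{α<ω₂}` of Boolean homomorphisms from a countable
Boolean algebra `B` into `M_{ω₂}`, there are two distinct symmetric indices: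
`φ_α a ⊓ φ_β b = ⊥ ↔ φ_β a ⊓ φ_α b = ⊥` for all `a b ∈ B`. -/
theorem exists_symmetric_pair (hCH : Cardinal.continuum = Cardinal.aleph 1)
    {B : Type} [BooleanAlgebra B] [Countable B]
    (φ : Omega2 → BoundedLatticeHom B (MAlg (Cube Omega2) (lam Omega2))) :
    ∃ α β : Omega2, α ≠ β ∧
      ∀ a b : B, (φ α a ⊓ φ β b = ⊥ ↔ φ β a ⊓ φ α b = ⊥) :=
  exists_ne_inf_eq_bot_iff_of_continuum_lt (continuum_lt_mk_omega2 hCH) (lam Omega2) fun α => φ α
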